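/- If p ≥ (log n)^2 / n, then for all sufficiently large n the random graph G(n,p) is connected with probability at least 1 - e^{-(log n)^2 / 8}. -/

import Mathlib

open MeasureTheory

/-- Bernoulli(p) measure on `Bool`. -/
noncomputable def bern (p : ℝ) : Measure Bool :=
  (Real.toNNReal p) • Measure.dirac true + (Real.toNNReal (1 - p)) • Measure.dirac false

instance (p : ℝ) : IsFiniteMeasure (bern p) := by
  unfold bern; infer_instance

/-- The Erdős–Rényi measure: each potential edge (element of `Sym2 (Fin n)`)
is present (`true`) independently with probability `p`. -/
noncomputable def erMeasure (n : ℕ) (p : ℝ) : Measure (Sym2 (Fin n) → Bool) :=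
  Measure.pi fun _ => bern p

/-- The random graph determined by the sample point `ω`. -/
def erGraph (n : ℕ) (ω : Sym2 (Fin n) → Bool) : SimpleGraph (Fin n) :=
  SimpleGraph.fromEdgeSet {e | ω e = true}

/-- Degree of a vertex. -/
noncomputable def degN {V : Type*} (G : SimpleGraph V) (v : V) : ℕ :=
  Nat.card (G.neighborSet v)

/-- Number of odd-degree vertices. -/
noncomputable def oddCount (n : ℕ) (ω : Sym2 (Fin n) → Bool) : ℕ :=
  Nat.card {v : Fin n // Odd (degN (erGraph n ω) v)}


/-! A disconnected graph on `n` vertices has a nonempty vertex set `S` with `|S| ≤ n/2` and no edge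
leaving it. For a fixed such `S` at least `|S| (n - |S|) ≥ |S| ⌊n/2⌋` potential edges must all be
absent, which happens with probability at most `r ^ |S|`, where `r = e^{-p ⌊n/2⌋}`. Summing over
`S`, with at most `n^k` sets of size `k`, gives `∑_{k ≥ 1} (n r)^k ≤ n^2 r` (as `n r ≤ 1`), and
`p ≥ (log n)^2 / n` makes `n^2 r ≤ e^{-(log n)^2 / 8}` once `log n ≥ 7`. -/

open Finset ENNReal

section EdgeBoundary

variable {V : Type*} [Fintype V] [DecidableEq V]

def edgeBoundary (S : Finset V) : Finset (Sym2 V) :=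
  (S ×ˢ Sᶜ).image fun x => s(x.1, x.2)

theorem card_edgeBoundary (S : Finset V) : #(edgeBoundary S) = #S * #Sᶜ := by
  rw [edgeBoundary, card_image_of_injOn, card_product]
  rintro ⟨u₁, v₁⟩ h₁ ⟨u₂, v₂⟩ h₂ h
  simp only [coe_product, Set.mem_prod, mem_coe, mem_compl] at h₁ h₂
  rcases Sym2.eq_iff.mp h with ⟨rfl, rfl⟩ | ⟨rfl, rfl⟩
  · rfl
  · exact absurd h₁.1 h₂.2

end EdgeBoundary

theorem SimpleGraph.exists_card_le_half_of_not_connected {V : Type*} [Fintype V] [Nonempty V]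
    {G : SimpleGraph V} (h : ¬G.Connected) :
    ∃ S : Finset V, S.Nonempty ∧ 2 * #S ≤ Fintype.card V ∧ ∀ u ∈ S, ∀ v ∉ S, ¬G.Adj u v := by
  classical
  obtain ⟨u, v, huv⟩ : ∃ u v, ¬G.Reachable u v := by
    by_contra! h'
    exact h ⟨h'⟩
  set T := univ.filter (G.Reachable u)
  have hT : ∀ a ∈ T, ∀ b ∉ T, ¬G.Adj a b := by
    simp only [T, mem_filter, mem_univ, true_and]
    exact fun a ha b hb hab => hb (ha.trans hab.reachable)
  by_cases hsmall : 2 * #T ≤ Fintype.card V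
  · exact ⟨T, ⟨u, by simp [T]⟩, hsmall, hT⟩
  · refine ⟨Tᶜ, ⟨v, by simpa [T] using huv⟩, by rw [card_compl]; omega, ?_⟩
    intro a ha b hb hab
    exact hT b (by simpa using hb) a (mem_compl.mp ha) hab.symm

theorem sum_pow_card_le_sq_mul {α : Type*} [Fintype α] {s : Finset (Finset α)}
    (hs : ∀ S ∈ s, S.Nonempty) {r : ℝ≥0∞} (hr : Fintype.card α * r ≤ 1) :
    ∑ S ∈ s, r ^ #S ≤ (Fintype.card α : ℝ≥0∞) ^ 2 * r := by
  set N := Fintype.card α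
  let f : ℕ → ℝ≥0∞ := fun k => if k = 0 then 0 else r ^ k
  have hterm : ∀ k ∈ range (N + 1), N.choose k • f k ≤ if k = 0 then 0 else N * r := by
    intro k _
    rcases eq_or_ne k 0 with rfl | hk
    · simp [f]
    · calc N.choose k • f k ≤ (N : ℝ≥0∞) ^ k * r ^ k := by
            simp only [f, hk, if_false, nsmul_eq_mul]
            gcongr
            exact_mod_cast Nat.choose_le_pow N k
        _ = (N * r) ^ k := (mul_pow _ _ _).symm
        _ ≤ N * r := pow_le_of_le_one zero_le hr hk
        _ = if k = 0 then 0 else N * r := by simp [hk]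
  calc ∑ S ∈ s, r ^ #S = ∑ S ∈ s, f #S :=
        sum_congr rfl fun S hS => by simp [f, (hs S hS).card_pos.ne']
    _ ≤ ∑ S ∈ (univ : Finset α).powerset, f #S := sum_le_sum_of_subset fun S _ => by simp
    _ = ∑ k ∈ range (N + 1), N.choose k • f k := by rw [sum_powerset_apply_card, card_univ]
    _ ≤ ∑ k ∈ range (N + 1), if k = 0 then 0 else N * r := sum_le_sum hterm
    _ = N ^ 2 * r := by simp [sum_range_succ', sq, mul_assoc]

theorem bern_singleton_false (p : ℝ) : bern p {false} = ENNReal.ofReal (1 - p) := by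
  simp [bern, ENNReal.ofReal]

theorem isProbabilityMeasure_bern {p : ℝ} (hp0 : 0 ≤ p) (hp1 : p ≤ 1) :
    IsProbabilityMeasure (bern p) := by
  constructor
  simp only [bern, Measure.add_apply, Measure.smul_apply, measure_univ, ENNReal.smul_def,
    smul_eq_mul, mul_one]
  rw [← ENNReal.coe_add, ← Real.toNNReal_add hp0 (by linarith)]
  norm_num

theorem isProbabilityMeasure_erMeasure (n : ℕ) {p : ℝ} (hp0 : 0 ≤ p) (hp1 : p ≤ 1) :
    IsProbabilityMeasure (erMeasure n p) := by
  have := isProbabilityMeasure_bern hp0 hp1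
  unfold erMeasure
  infer_instance

theorem erMeasure_forall_eq_false (n : ℕ) {p : ℝ} (hp0 : 0 ≤ p) (hp1 : p ≤ 1)
    (F : Finset (Sym2 (Fin n))) :
    erMeasure n p {ω | ∀ e ∈ F, ω e = false} = ENNReal.ofReal (1 - p) ^ #F := by
  classical
  have := isProbabilityMeasure_bern hp0 hp1
  have hpi : {ω : Sym2 (Fin n) → Bool | ∀ e ∈ F, ω e = false}
      = Set.univ.pi fun e => if e ∈ F then {false} else Set.univ := by
    ext ω
    simp only [Set.mem_ofPred_eq, Set.mem_pi, Set.mem_univ, true_implies]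
    refine forall_congr' fun e => ?_
    split_ifs with he <;> simp [he]
  rw [hpi, erMeasure, Measure.pi_pi]
  simp only [apply_ite (bern p), bern_singleton_false, measure_univ]
  rw [prod_ite_mem, univ_inter, prod_const]

theorem erMeasure_edgeBoundary_le {n : ℕ} {p : ℝ} (hp0 : 0 ≤ p) (hp1 : p ≤ 1)
    {S : Finset (Fin n)} (hS : 2 * #S ≤ n) :
    erMeasure n p {ω | ∀ e ∈ edgeBoundary S, ω e = false}
      ≤ (ENNReal.ofReal (Real.exp (-p)) ^ (n / 2)) ^ #S := by
  have hq : ENNReal.ofReal (Real.exp (-p)) ≤ 1 :=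
    ENNReal.ofReal_le_one.mpr (Real.exp_le_one_iff.mpr (neg_nonpos.mpr hp0))
  have hcard : #S * (n / 2) ≤ #(edgeBoundary S) := by
    rw [card_edgeBoundary, card_compl, Fintype.card_fin]
    exact Nat.mul_le_mul_left _ (by omega)
  calc erMeasure n p {ω | ∀ e ∈ edgeBoundary S, ω e = false}
      = ENNReal.ofReal (1 - p) ^ #(edgeBoundary S) := erMeasure_forall_eq_false n hp0 hp1 _
    _ ≤ ENNReal.ofReal (Real.exp (-p)) ^ #(edgeBoundary S) := by
        gcongr
        exact Real.one_sub_le_exp_neg p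
    _ ≤ ENNReal.ofReal (Real.exp (-p)) ^ (#S * (n / 2)) := pow_le_pow_of_le_one zero_le hq hcard
    _ = (ENNReal.ofReal (Real.exp (-p)) ^ (n / 2)) ^ #S := by rw [mul_comm, pow_mul]

theorem erGraph_not_connected_subset {n : ℕ} (hn : 0 < n) :
    {ω | ¬(erGraph n ω).Connected} ⊆ ⋃ S ∈ univ.filter (fun S : Finset (Fin n) =>
      S.Nonempty ∧ 2 * #S ≤ n), {ω | ∀ e ∈ edgeBoundary S, ω e = false} := by
  intro ω hω
  have : Nonempty (Fin n) := ⟨⟨0, hn⟩⟩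
  obtain ⟨S, hS, hsmall, hcut⟩ := SimpleGraph.exists_card_le_half_of_not_connected hω
  rw [Fintype.card_fin] at hsmall
  refine Set.mem_biUnion (x := S) (by simp [hS, hsmall]) ?_
  simp only [edgeBoundary, mem_image, mem_product, mem_compl, Set.mem_ofPred_eq]
  rintro _ ⟨⟨u, v⟩, ⟨hu, hv⟩, rfl⟩
  have huv : u ≠ v := fun h => hv (h ▸ hu)
  simpa [erGraph, huv] using hcut u hu v hv

theorem erMeasure_not_connected_le {n : ℕ} (hn : 0 < n) {p : ℝ} (hp0 : 0 ≤ p) (hp1 : p ≤ 1)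
    (hr : (n : ℝ≥0∞) * ENNReal.ofReal (Real.exp (-p)) ^ (n / 2) ≤ 1) :
    erMeasure n p {ω | ¬(erGraph n ω).Connected}
      ≤ (n : ℝ≥0∞) ^ 2 * ENNReal.ofReal (Real.exp (-p)) ^ (n / 2) := by
  set small := univ.filter fun S : Finset (Fin n) => S.Nonempty ∧ 2 * #S ≤ n
  calc erMeasure n p {ω | ¬(erGraph n ω).Connected}
      ≤ ∑ S ∈ small, erMeasure n p {ω | ∀ e ∈ edgeBoundary S, ω e = false} :=
        (measure_mono (erGraph_not_connected_subset hn)).trans (measure_biUnion_finset_le _ _)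
    _ ≤ ∑ S ∈ small, (ENNReal.ofReal (Real.exp (-p)) ^ (n / 2)) ^ #S :=
        sum_le_sum fun S hS => erMeasure_edgeBoundary_le hp0 hp1 (mem_filter.mp hS).2.2
    _ ≤ _ := by
        have := sum_pow_card_le_sq_mul (s := small) (fun S hS => (mem_filter.mp hS).2.1)
          (by rwa [Fintype.card_fin])
        rwa [Fintype.card_fin] at this

theorem seven_le_log_of_le {n : ℕ} (hn : 1097 ≤ n) : 7 ≤ Real.log n := by
  rw [Real.le_log_iff_exp_le (by positivity)]
  calc Real.exp 7 = Real.exp 1 ^ 7 := by rw [← Real.exp_nat_mul]; norm_num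
    _ ≤ 2.7182818286 ^ 7 := by gcongr; exact Real.exp_one_lt_d9.le
    _ ≤ 1097 := by norm_num
    _ ≤ n := by exact_mod_cast hn

theorem sq_mul_exp_neg_pow_half_le {n : ℕ} (hL : 7 ≤ Real.log n) {p : ℝ}
    (hp : Real.log n ^ 2 / n ≤ p) (hp1 : p ≤ 1) :
    (n : ℝ) ^ 2 * Real.exp (-p) ^ (n / 2) ≤ Real.exp (-Real.log n ^ 2 / 8) := by
  have hn : (0 : ℝ) < n := by
    rcases Nat.eq_zero_or_pos n with rfl | hn
    · norm_num at hL
    · exact_mod_cast hn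
  set L := Real.log n
  have hp0 : 0 ≤ p := (by positivity : 0 ≤ L ^ 2 / n).trans hp
  have hhalf : ((n : ℝ) - 1) / 2 ≤ (n / 2 : ℕ) := by
    have : n ≤ 2 * (n / 2) + 1 := by omega
    have : (n : ℝ) ≤ 2 * (n / 2 : ℕ) + 1 := by exact_mod_cast this
    linarith
  have hpn : L ^ 2 ≤ p * n := (div_le_iff₀ hn).mp hp
  have hexponent : 2 * L + L ^ 2 / 8 ≤ (n / 2 : ℕ) * p := by
    nlinarith [mul_le_mul_of_nonneg_right hhalf hp0]
  calc (n : ℝ) ^ 2 * Real.exp (-p) ^ (n / 2) = Real.exp (2 * L - (n / 2 : ℕ) * p) := by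
        rw [show 2 * L - (n / 2 : ℕ) * p = (2 : ℕ) * L + (n / 2 : ℕ) * -p by push_cast; ring,
          Real.exp_add, Real.exp_nat_mul, Real.exp_nat_mul, Real.exp_log hn]
    _ ≤ Real.exp (-L ^ 2 / 8) := Real.exp_le_exp.mpr (by linarith)

/-- If `p ≥ (log n)^2/n` then for all large `n` the graph `G(n,p)` is connected
with probability at least `1 - e^(-(log n)^2/8)`. -/
theorem connected_whp :
    ∃ n0 : ℕ, ∀ n : ℕ, n0 ≤ n → ∀ p : ℝ,
      (Real.log n) ^ 2 / n ≤ p → p ≤ 1 →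
      ENNReal.ofReal (1 - Real.exp (-(Real.log n) ^ 2 / 8))
        ≤ erMeasure n p {ω | (erGraph n ω).Connected} := by
  refine ⟨1097, fun n hn p hp hp1 => ?_⟩
  have hL := seven_le_log_of_le hn
  have hp0 : 0 ≤ p := (by positivity : (0 : ℝ) ≤ Real.log n ^ 2 / n).trans hp
  have := isProbabilityMeasure_erMeasure n hp0 hp1
  set x := Real.exp (-Real.log n ^ 2 / 8)
  have hsq : (n : ℝ≥0∞) ^ 2 * ENNReal.ofReal (Real.exp (-p)) ^ (n / 2) ≤ ENNReal.ofReal x := by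
    rw [← ENNReal.ofReal_natCast, ← ENNReal.ofReal_pow (Nat.cast_nonneg n),
      ← ENNReal.ofReal_pow (Real.exp_nonneg _), ← ENNReal.ofReal_mul (by positivity)]
    exact ENNReal.ofReal_le_ofReal (sq_mul_exp_neg_pow_half_le hL hp hp1)
  set r := ENNReal.ofReal (Real.exp (-p)) ^ (n / 2)
  have hx : ENNReal.ofReal x ≤ 1 :=
    ENNReal.ofReal_le_one.mpr (Real.exp_le_one_iff.mpr (by nlinarith))
  have hr : (n : ℝ≥0∞) * r ≤ 1 := calc
    (n : ℝ≥0∞) * r ≤ (n : ℝ≥0∞) ^ 2 * r := by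
      gcongr
      exact_mod_cast Nat.le_self_pow two_ne_zero n
    _ ≤ 1 := hsq.trans hx
  calc ENNReal.ofReal (1 - x) = 1 - ENNReal.ofReal x := by
        rw [ENNReal.ofReal_sub _ (Real.exp_nonneg _), ENNReal.ofReal_one]
    _ ≤ 1 - erMeasure n p {ω | ¬(erGraph n ω).Connected} :=
        tsub_le_tsub_left ((erMeasure_not_connected_le (by omega) hp0 hp1 hr).trans hsq) 1
    _ ≤ erMeasure n p {ω | (erGraph n ω).Connected} := by
        rw [tsub_le_iff_left, ← measure_univ (μ := erMeasure n p)]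
        simpa [Set.compl_ofPred] using measure_univ_le_add_compl (μ := erMeasure n p)
          {ω | ¬(erGraph n ω).Connected}
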